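/- Let m ∈ {−1,+1} be uniform, let Z given m be distributed as |G|·m where G ~ N(0,1) (i.e., a half-normal with sign m), and let Z' = Z + N with N ~ N(0, σ²) independent. Then E[m | Z' = z] = erf( z / √(2σ²(1+σ²)) ). -/

import Mathlib

open MeasureTheory

/-- The standard normal density. -/
noncomputable def stdNormalPDF (x : ℝ) : ℝ :=
  (Real.sqrt (2 * Real.pi))⁻¹ * Real.exp (-x ^ 2 / 2)

/-- The density of `N(0,σ²)`. -/
noncomputable def noisePDF (σ x : ℝ) : ℝ :=
  (σ * Real.sqrt (2 * Real.pi))⁻¹ * Real.exp (-x ^ 2 / (2 * σ ^ 2))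

/-- The Gauss error function `erf(x) = (2/√π) ∫_0^x e^{-t²} dt`. -/
noncomputable def erf (x : ℝ) : ℝ :=
  2 / Real.sqrt Real.pi * ∫ t in (0 : ℝ)..x, Real.exp (-t ^ 2)

lemma shift_integral_Ioi (g : ℝ → ℝ) (μ : ℝ) :
    ∫ t in Set.Ioi (0 : ℝ), g (t - μ) = ∫ u in Set.Ioi (-μ), g u := by
  have hmp : MeasurePreserving (fun x : ℝ => x + -μ) volume volume :=
    measurePreserving_add_right volume (-μ)
  have h := hmp.setIntegral_preimage_emb (measurableEmbedding_addRight (-μ)) g (Set.Ioi (-μ))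
  have hpre : (fun x : ℝ => x + -μ) ⁻¹' Set.Ioi (-μ) = Set.Ioi (0 : ℝ) := by
    ext x; simp [Set.mem_preimage]
  rw [hpre] at h
  simpa [sub_eq_add_neg] using h

lemma shift_integral_Iio (g : ℝ → ℝ) (μ : ℝ) :
    ∫ t in Set.Iio (0 : ℝ), g (t - μ) = ∫ u in Set.Iio (-μ), g u := by
  have hmp : MeasurePreserving (fun x : ℝ => x + -μ) volume volume :=
    measurePreserving_add_right volume (-μ)
  have h := hmp.setIntegral_preimage_emb (measurableEmbedding_addRight (-μ)) g (Set.Iio (-μ))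
  have hpre : (fun x : ℝ => x + -μ) ⁻¹' Set.Iio (-μ) = Set.Iio (0 : ℝ) := by
    ext x; simp [Set.mem_preimage]
  rw [hpre] at h
  simpa [sub_eq_add_neg] using h

/-- AWGN posterior of a sign-encoded half-normal symbol: let `m ∈ {-1,+1}` be uniform, let
`Z | m` be the half-normal `|G|·m` with `G ~ N(0,1)` (density `2·f` on the half-line of
sign `m`), and let `Z' = Z + N` with `N ~ N(0,σ²)` independent. With `h⁺`/`h⁻` the densities
of `Z'` given `m = ±1`, the posterior expectation is
`E[m | Z' = z] = (h⁺(z) - h⁻(z))/(h⁺(z) + h⁻(z)) = erf (z / √(2σ²(1+σ²)))`. -/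
theorem half_normal_awgn_posterior_erf (σ : ℝ) (hσ : 0 < σ)
    (hplus hminus : ℝ → ℝ)
    (hp : ∀ z, hplus z = ∫ t in Set.Ioi (0 : ℝ), 2 * stdNormalPDF t * noisePDF σ (z - t))
    (hm : ∀ z, hminus z = ∫ t in Set.Iio (0 : ℝ), 2 * stdNormalPDF t * noisePDF σ (z - t))
    (z : ℝ) :
    (hplus z - hminus z) / (hplus z + hminus z)
      = erf (z / Real.sqrt (2 * σ ^ 2 * (1 + σ ^ 2))) := by
  have hπ : (0:ℝ) < Real.pi := Real.pi_pos
  have hσ2 : (0:ℝ) < σ ^ 2 := by positivity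
  have h1σ : (0:ℝ) < 1 + σ ^ 2 := by positivity
  set c : ℝ := (1 + σ ^ 2) / (2 * σ ^ 2) with hc
  have hcpos : 0 < c := by positivity
  set μ : ℝ := z / (1 + σ ^ 2) with hμdef
  set K : ℝ := (Real.pi * σ)⁻¹ * Real.exp (-z ^ 2 / (2 * (1 + σ ^ 2))) with hK
  have hKpos : 0 < K := by positivity
  set g : ℝ → ℝ := fun u => Real.exp (-c * u ^ 2) with hg
  have hgint : Integrable g := integrable_exp_neg_mul_sq hcpos
  -- pointwise identity
  have hpt : ∀ t, 2 * stdNormalPDF t * noisePDF σ (z - t) = K * g (t - μ) := by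
    intro t
    unfold stdNormalPDF noisePDF
    have h2π : Real.sqrt (2 * Real.pi) * Real.sqrt (2 * Real.pi) = 2 * Real.pi :=
      Real.mul_self_sqrt (by positivity)
    have hconst : 2 * (Real.sqrt (2 * Real.pi))⁻¹ * (σ * Real.sqrt (2 * Real.pi))⁻¹
        = (Real.pi * σ)⁻¹ := by
      have step : (2:ℝ) * (Real.sqrt (2 * Real.pi))⁻¹ * (σ * Real.sqrt (2 * Real.pi))⁻¹
          = 2 * (Real.sqrt (2 * Real.pi) * Real.sqrt (2 * Real.pi) * σ)⁻¹ := by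
        rw [mul_inv, mul_inv, mul_inv]; ring
      rw [step, h2π, show (2:ℝ) * Real.pi * σ = 2 * (Real.pi * σ) by ring, mul_inv]
      ring
    have hexp : -t ^ 2 / 2 + -(z - t) ^ 2 / (2 * σ ^ 2)
        = -z ^ 2 / (2 * (1 + σ ^ 2)) + -c * (t - μ) ^ 2 := by
      rw [hc, hμdef]
      field_simp
      ring
    calc 2 * ((Real.sqrt (2 * Real.pi))⁻¹ * Real.exp (-t ^ 2 / 2)) *
          ((σ * Real.sqrt (2 * Real.pi))⁻¹ * Real.exp (-(z - t) ^ 2 / (2 * σ ^ 2)))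
        = (2 * (Real.sqrt (2 * Real.pi))⁻¹ * (σ * Real.sqrt (2 * Real.pi))⁻¹) *
          Real.exp (-t ^ 2 / 2 + -(z - t) ^ 2 / (2 * σ ^ 2)) := by
          rw [Real.exp_add]; ring
      _ = K * g (t - μ) := by
          rw [hconst, hexp, Real.exp_add, hK, hg]; ring
  -- rewrite the two densities
  have hpA : hplus z = K * ∫ u in Set.Ioi (-μ), g u := by
    rw [hp z]
    simp_rw [hpt]
    rw [MeasureTheory.integral_const_mul, shift_integral_Ioi]
  have hmA : hminus z = K * ∫ u in Set.Iio (-μ), g u := by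
    rw [hm z]
    simp_rw [hpt]
    rw [MeasureTheory.integral_const_mul, shift_integral_Iio]
  set A : ℝ := ∫ u in Set.Ioi (-μ), g u with hA
  set B : ℝ := ∫ u in Set.Iio (-μ), g u with hB
  set T : ℝ := Real.sqrt (Real.pi / c) with hT
  have hTpos : 0 < T := Real.sqrt_pos.mpr (by positivity)
  have htot : (∫ u, g u) = T := integral_gaussian c
  have hBIic : B = ∫ u in Set.Iic (-μ), g u := (integral_Iic_eq_integral_Iio).symm
  have hAB : A + B = T := by
    rw [hBIic, hA, add_comm, intervalIntegral.integral_Iic_add_Ioi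
      hgint.integrableOn hgint.integrableOn, htot]
  have hIic0 : (∫ u in Set.Iic (0:ℝ), g u) = T / 2 := by
    have hIoi0 : (∫ u in Set.Ioi (0:ℝ), g u) = T / 2 := by
      rw [hg, hT]; exact integral_gaussian_Ioi c
    have := intervalIntegral.integral_Iic_add_Ioi (b := (0:ℝ))
      hgint.integrableOn hgint.integrableOn (f := g)
    rw [htot, hIoi0] at this
    linarith
  have hBval : B = T / 2 - ∫ u in (-μ)..0, g u := by
    have h1 : (∫ u in Set.Iic (0:ℝ), g u) - (∫ u in Set.Iic (-μ), g u)
        = ∫ u in (-μ)..0, g u :=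
      intervalIntegral.integral_Iic_sub_Iic hgint.integrableOn hgint.integrableOn
    rw [hBIic]
    rw [hIic0] at h1
    linarith
  have heven : (∫ u in (-μ)..0, g u) = ∫ u in (0:ℝ)..μ, g u := by
    have h := intervalIntegral.integral_comp_neg (a := (0:ℝ)) (b := μ) (f := g)
    rw [neg_zero] at h
    rw [← h]
    refine intervalIntegral.integral_congr fun x _ => ?_
    simp [hg]
  have hAmB : A - B = 2 * ∫ u in (0:ℝ)..μ, g u := by
    have : A = T - B := by linarith [hAB]
    rw [this, hBval, heven]; ring
  -- substitution in the interval integral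
  set sc : ℝ := Real.sqrt c with hsc
  have hscpos : 0 < sc := Real.sqrt_pos.mpr hcpos
  have hsc2 : sc ^ 2 = c := Real.sq_sqrt hcpos.le
  have hsub : (∫ u in (0:ℝ)..μ, g u) = sc⁻¹ * ∫ t in (0:ℝ)..(μ * sc), Real.exp (-t ^ 2) := by
    have hptg : ∀ u : ℝ, g u = Real.exp (-(u * sc) ^ 2) := by
      intro u
      rw [hg]
      simp only
      congr 1
      rw [mul_pow, hsc2]
      ring
    have h := intervalIntegral.smul_integral_comp_mul_right (a := (0:ℝ)) (b := μ)
      (fun t => Real.exp (-t ^ 2)) sc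
    simp only [zero_mul, smul_eq_mul] at h
    rw [intervalIntegral.integral_congr (g := fun u => Real.exp (-(u * sc) ^ 2))
      (fun u _ => hptg u), ← h, inv_mul_cancel_left₀ hscpos.ne']
  -- identify the erf argument
  have harg : μ * sc = z / Real.sqrt (2 * σ ^ 2 * (1 + σ ^ 2)) := by
    have hprod : sc * Real.sqrt (2 * σ ^ 2 * (1 + σ ^ 2)) = 1 + σ ^ 2 := by
      rw [hsc, ← Real.sqrt_mul hcpos.le]
      have : c * (2 * σ ^ 2 * (1 + σ ^ 2)) = (1 + σ ^ 2) ^ 2 := by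
        rw [hc]; field_simp
      rw [this, Real.sqrt_sq h1σ.le]
    have hs2pos : 0 < Real.sqrt (2 * σ ^ 2 * (1 + σ ^ 2)) :=
      Real.sqrt_pos.mpr (by positivity)
    rw [hμdef]
    rw [div_mul_eq_mul_div, div_eq_div_iff h1σ.ne' hs2pos.ne']
    linear_combination z * hprod
  -- final computation
  have hTval : T = Real.sqrt Real.pi / sc := by
    rw [hT, hsc, Real.sqrt_div hπ.le]
  have hfin : (hplus z - hminus z) / (hplus z + hminus z) = (A - B) / (A + B) := by
    rw [hpA, hmA, ← mul_sub, ← mul_add, mul_div_mul_left _ _ hKpos.ne']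
  rw [hfin, hAmB, hsub, hAB, hTval, erf, ← harg]
  have hsqπ : Real.sqrt Real.pi ≠ 0 := (Real.sqrt_pos.mpr hπ).ne'
  field_simp
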